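/- (IRLS descent step for R.) Let E be a real n × d matrix, W a real d × c matrix, Z a real n × c matrix, and β > 0. Let R and R' be real c × n matrices such that every row of R is nonzero, and let D be the c × c diagonal matrix with diagonal entries D(j,j) = 1 / (2‖R(j,:)‖₂). If the reweighted quadratic objective satisfies ‖E W − Z − R'ᵀ‖_F² + β Σ_j ‖R'(j,:)‖₂² / (2‖R(j,:)‖₂) ≤ ‖E W − Z − Rᵀ‖_F² + β Σ_j ‖R(j,:)‖₂² / (2‖R(j,:)‖₂), then ‖E W − Z − R'ᵀ‖_F² + β ‖R'‖_{2,1} ≤ ‖E W − Z − Rᵀ‖_F² + β ‖R‖_{2,1}. -/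

import Mathlib

/-- The Euclidean norm of the `j`-th row of a real matrix `M`. -/
noncomputable def rowNorm {m n : ℕ} (M : Matrix (Fin m) (Fin n) ℝ) (j : Fin m) : ℝ :=
  Real.sqrt (∑ k, (M j k) ^ 2)

/-- The ℓ2,1-norm of a real matrix: the sum of the Euclidean norms of its rows. -/
noncomputable def norm21 {m n : ℕ} (M : Matrix (Fin m) (Fin n) ℝ) : ℝ :=
  ∑ j, rowNorm M j

/-- The squared Frobenius norm of a real matrix. -/
noncomputable def frobSq {m n : ℕ} (M : Matrix (Fin m) (Fin n) ℝ) : ℝ :=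
  ∑ i, ∑ j, (M i j) ^ 2

/-! Since `t ↦ t - t² / (2b)` is maximised at `t = b`, each row norm decreases at least as
much as its square reweighted by the old row norm; summing over the rows and scaling by `β ≥ 0`
turns the decrease of the reweighted objective into a decrease of the ℓ2,1 objective. -/

lemma sub_sq_div_two_mul_le {a b : ℝ} (hb : 0 < b) :
    a - a ^ 2 / (2 * b) ≤ b - b ^ 2 / (2 * b) := by
  have hgap : b - b ^ 2 / (2 * b) - (a - a ^ 2 / (2 * b)) = (a - b) ^ 2 / (2 * b) := by
    field_simp
    ring
  have : 0 ≤ (a - b) ^ 2 / (2 * b) := by positivity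
  linarith

lemma rowNorm_pos {m n : ℕ} {M : Matrix (Fin m) (Fin n) ℝ} {j : Fin m} (h : M j ≠ 0) :
    0 < rowNorm M j := by
  obtain ⟨k, hk⟩ := Function.ne_iff.mp h
  exact Real.sqrt_pos.2 <|
    Finset.sum_pos' (fun _ _ => sq_nonneg _) ⟨k, Finset.mem_univ k, sq_pos_of_ne_zero hk⟩

lemma norm21_sub_sum_sq_div_le {m n : ℕ} {R : Matrix (Fin m) (Fin n) ℝ} (hR : ∀ j, R j ≠ 0)
    (R' : Matrix (Fin m) (Fin n) ℝ) :
    norm21 R' - ∑ j, rowNorm R' j ^ 2 / (2 * rowNorm R j) ≤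
      norm21 R - ∑ j, rowNorm R j ^ 2 / (2 * rowNorm R j) := by
  simp only [norm21, ← Finset.sum_sub_distrib]
  exact Finset.sum_le_sum fun j _ => sub_sq_div_two_mul_le (rowNorm_pos (hR j))

theorem irls_descent_R_general (n d c : ℕ) (E : Matrix (Fin n) (Fin d) ℝ)
    (W : Matrix (Fin d) (Fin c) ℝ) (Z : Matrix (Fin n) (Fin c) ℝ) (β : ℝ) (hβ : 0 < β)
    (R R' : Matrix (Fin c) (Fin n) ℝ) (hR : ∀ j, R j ≠ 0)
    (hstep : frobSq (E * W - Z - R'.transpose) +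
        β * ∑ j, (rowNorm R' j) ^ 2 / (2 * rowNorm R j) ≤
      frobSq (E * W - Z - R.transpose) +
        β * ∑ j, (rowNorm R j) ^ 2 / (2 * rowNorm R j)) :
    frobSq (E * W - Z - R'.transpose) + β * norm21 R' ≤
      frobSq (E * W - Z - R.transpose) + β * norm21 R := by
  have hsurrogate := mul_le_mul_of_nonneg_left (norm21_sub_sum_sq_div_le hR R') hβ.le
  linarith

/-- IRLS descent step for `R`: if the reweighted quadratic objective (with diagonal
reweighting matrix `D(j,j) = 1/(2‖R(j,:)‖₂)`) does not increase when passing from `R`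
to `R'`, then neither does the original ℓ2,1-regularized objective. -/
theorem irls_descent_R (n d c : ℕ) (E : Matrix (Fin n) (Fin d) ℝ)
    (W : Matrix (Fin d) (Fin c) ℝ) (Z : Matrix (Fin n) (Fin c) ℝ) (β : ℝ) (hβ : 0 < β)
    (R R' : Matrix (Fin c) (Fin n) ℝ) (hR : ∀ j, R j ≠ 0)
    (D : Matrix (Fin c) (Fin c) ℝ)
    (hD : D = Matrix.diagonal fun j => 1 / (2 * rowNorm R j))
    (hstep : frobSq (E * W - Z - R'.transpose) +
        β * ∑ j, (rowNorm R' j) ^ 2 / (2 * rowNorm R j) ≤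
      frobSq (E * W - Z - R.transpose) +
        β * ∑ j, (rowNorm R j) ^ 2 / (2 * rowNorm R j)) :
    frobSq (E * W - Z - R'.transpose) + β * norm21 R' ≤
      frobSq (E * W - Z - R.transpose) + β * norm21 R :=
  irls_descent_R_general n d c E W Z β hβ R R' hR hstep
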